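/- Let E be a real Hilbert space and let L be an orthomodular lattice admitting a strong set of E-valued states. Then for every n ≥ 2 and all a, b : Fin n → L with a(i) ⊥ a(j) for all i ≠ j and a(i) ⊥ b(i) for all i, equation Eₙ holds: (⨆_i a(i)) ∩ ⨅_i (a(i) ∪ b(i)) ≤ ⨆_i b(i). -/

import Mathlib

/-- An ortholattice: a bounded lattice with an orthocomplementation. -/
class Ortholattice (α : Type*) extends Lattice α, BoundedOrder α where
  ocompl : α → α
  sup_ocompl : ∀ a : α, a ⊔ ocompl a = ⊤
  inf_ocompl : ∀ a : α, a ⊓ ocompl a = ⊥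
  ocompl_anti : ∀ a b : α, a ≤ b → ocompl b ≤ ocompl a
  ocompl_ocompl : ∀ a : α, ocompl (ocompl a) = a

postfix:max "ᗮ" => Ortholattice.ocompl

/-- An orthomodular lattice. -/
class OrthomodularLattice (α : Type*) extends Ortholattice α where
  orthomodular : ∀ a b : α, a ≤ b → b = a ⊔ (aᗮ ⊓ b)

/-- The Sasaki hook `x → y = x′ ∪ (x ∩ y)`. -/
def oimp {α : Type*} [Ortholattice α] (x y : α) : α := xᗮ ⊔ (x ⊓ y)

/-- An `E`-valued state on an ortholattice, for a real Hilbert space `E`. -/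
structure HState (E : Type*) [NormedAddCommGroup E] [InnerProductSpace ℝ E]
    (α : Type*) [Ortholattice α] where
  val : α → E
  norm_top : ‖val ⊤‖ = 1
  additive : ∀ a b : α, a ≤ bᗮ → val (a ⊔ b) = val a + val b
  orthogonal : ∀ a b : α, a ≤ bᗮ → (inner ℝ (val a) (val b) : ℝ) = 0

/-- A strong set of `E`-valued states. -/
def IsStrongHSet {E : Type*} [NormedAddCommGroup E] [InnerProductSpace ℝ E]
    {α : Type*} [Ortholattice α] (S : Set (HState E α)) : Prop :=
  ∀ a b : α, (∀ s ∈ S, ‖s.val a‖ = 1 → ‖s.val b‖ = 1) → a ≤ b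

/-!
Fix a state `s` with `‖s x‖ = 1` for `x = (⋁ aᵢ) ⊓ ⋀ (aᵢ ⊔ bᵢ)`. By orthomodularity, a state of
norm one on `x` takes the same value on everything above `x`, so `s (⋁ aᵢ) = s (aᵢ ⊔ bᵢ) = s x`.
Hence `s bᵢ = s x - s aᵢ` and `∑ s bᵢ = (n - 1) • s x`, while Pythagoras gives
`∑ ‖s bᵢ‖² = n - ∑ ‖s aᵢ‖² = n - 1`. Since `⟪s (⋁ bᵢ), s bᵢ⟫ = ‖s bᵢ‖²`, pairing with `s (⋁ bᵢ)`
yields `⟪s (⋁ bᵢ), s x⟫ = 1`, and Cauchy–Schwarz forces `‖s (⋁ bᵢ)‖ = 1`; strongness concludes.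
-/

open Finset

namespace Ortholattice

variable {α : Type*} [Ortholattice α]

theorem le_ocompl_comm {a b : α} (h : a ≤ bᗮ) : b ≤ aᗮ := by
  simpa only [ocompl_ocompl] using ocompl_anti _ _ h

theorem le_ocompl_finset_sup {ι : Type*} {t : Finset ι} {a : ι → α}
    (h : ∀ i j, i ≠ j → a i ≤ (a j)ᗮ) {i : ι} (hi : i ∉ t) : a i ≤ (t.sup a)ᗮ :=
  le_ocompl_comm (Finset.sup_le fun j hj => h j i (ne_of_mem_of_not_mem hj hi))

end Ortholattice

namespace OrthomodularLattice

variable {α : Type*} [OrthomodularLattice α]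

theorem exists_orthogonal_sup_eq_of_le {a b : α} (h : a ≤ b) : ∃ c : α, a ≤ cᗮ ∧ b = a ⊔ c :=
  ⟨aᗮ ⊓ b, Ortholattice.le_ocompl_comm inf_le_left, orthomodular a b h⟩

end OrthomodularLattice

namespace HState

open scoped RealInnerProductSpace

variable {E : Type*} [NormedAddCommGroup E] [InnerProductSpace ℝ E]

section Ortholattice

variable {α : Type*} [Ortholattice α] (s : HState E α)

theorem val_bot : s.val ⊥ = 0 := by
  have h := s.additive ⊥ ⊥ bot_le
  rwa [sup_idem, left_eq_add] at h

theorem norm_sq_val_sup {a b : α} (h : a ≤ bᗮ) :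
    ‖s.val (a ⊔ b)‖ ^ 2 = ‖s.val a‖ ^ 2 + ‖s.val b‖ ^ 2 := by
  rw [s.additive a b h, norm_add_sq_real, s.orthogonal a b h]
  ring

theorem norm_val_le_one (a : α) : ‖s.val a‖ ≤ 1 := by
  have h := s.norm_sq_val_sup (a := a) (b := aᗮ) (Ortholattice.ocompl_ocompl a).ge
  rw [Ortholattice.sup_ocompl, s.norm_top] at h
  nlinarith [norm_nonneg (s.val a), sq_nonneg ‖s.val aᗮ‖]

theorem val_finset_sup {ι : Type*} (t : Finset ι) {a : ι → α}
    (h : ∀ i j, i ≠ j → a i ≤ (a j)ᗮ) : s.val (t.sup a) = ∑ i ∈ t, s.val (a i) := by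
  induction t using Finset.cons_induction with
  | empty => simp [val_bot]
  | cons i t hi ih =>
    rw [sup_cons, sum_cons, s.additive _ _ (Ortholattice.le_ocompl_finset_sup h hi), ih]

theorem sum_norm_sq_val {ι : Type*} (t : Finset ι) {a : ι → α}
    (h : ∀ i j, i ≠ j → a i ≤ (a j)ᗮ) : ∑ i ∈ t, ‖s.val (a i)‖ ^ 2 = ‖s.val (t.sup a)‖ ^ 2 := by
  induction t using Finset.cons_induction with
  | empty => simp [val_bot]
  | cons i t hi ih =>
    rw [sup_cons, sum_cons, s.norm_sq_val_sup (Ortholattice.le_ocompl_finset_sup h hi), ih]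

end Ortholattice

section OrthomodularLattice

variable {α : Type*} [OrthomodularLattice α] (s : HState E α)

theorem inner_val_of_le {a b : α} (h : a ≤ b) : ⟪s.val b, s.val a⟫ = ‖s.val a‖ ^ 2 := by
  obtain ⟨c, hac, rfl⟩ := OrthomodularLattice.exists_orthogonal_sup_eq_of_le h
  rw [s.additive a c hac, inner_add_left, real_inner_self_eq_norm_sq, real_inner_comm,
    s.orthogonal a c hac, add_zero]

theorem val_eq_of_le_of_norm_eq_one {a b : α} (h : a ≤ b) (ha : ‖s.val a‖ = 1) :
    s.val b = s.val a := by
  obtain ⟨c, hac, rfl⟩ := OrthomodularLattice.exists_orthogonal_sup_eq_of_le h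
  have hpyth := s.norm_sq_val_sup hac
  have hc : ‖s.val c‖ = 0 := by
    nlinarith [s.norm_val_le_one (a ⊔ c), norm_nonneg (s.val (a ⊔ c)), norm_nonneg (s.val c)]
  rw [s.additive a c hac, norm_eq_zero.mp hc, add_zero]

theorem norm_val_sup_eq_one_of_norm_val_eq_one {ι : Type*} [Fintype ι] {a b : ι → α}
    (haa : ∀ i j, i ≠ j → a i ≤ (a j)ᗮ) (hab : ∀ i, a i ≤ (b i)ᗮ) (hι : Fintype.card ι ≠ 1)
    (hx : ‖s.val (univ.sup a ⊓ univ.inf fun i => a i ⊔ b i)‖ = 1) :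
    ‖s.val (univ.sup b)‖ = 1 := by
  set x := univ.sup a ⊓ univ.inf fun i => a i ⊔ b i
  set m : ℝ := (Fintype.card ι : ℝ)
  have hA : s.val (univ.sup a) = s.val x := s.val_eq_of_le_of_norm_eq_one inf_le_left hx
  have hsup : ∀ i, s.val (a i ⊔ b i) = s.val x := fun i =>
    s.val_eq_of_le_of_norm_eq_one (inf_le_right.trans (inf_le (mem_univ i))) hx
  have hsum_a : ∑ i, ‖s.val (a i)‖ ^ 2 = 1 := by rw [s.sum_norm_sq_val univ haa, hA, hx, one_pow]
  have hb : ∀ i, s.val (b i) = s.val x - s.val (a i) := fun i =>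
    eq_sub_of_add_eq' ((s.additive _ _ (hab i)).symm.trans (hsup i))
  have hnorm_b : ∀ i, ‖s.val (b i)‖ ^ 2 = 1 - ‖s.val (a i)‖ ^ 2 := fun i => by
    rw [eq_sub_iff_add_eq', ← s.norm_sq_val_sup (hab i), hsup i, hx, one_pow]
  have hsum_b : ∑ i, s.val (b i) = (m - 1) • s.val x := by
    simp only [hb, sum_sub_distrib, ← s.val_finset_sup univ haa, hA, sum_const, card_univ,
      sub_smul, one_smul, m, Nat.cast_smul_eq_nsmul]
  have hinner : (m - 1) * ⟪s.val (univ.sup b), s.val x⟫ = m - 1 := by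
    calc (m - 1) * ⟪s.val (univ.sup b), s.val x⟫
        = ⟪s.val (univ.sup b), ∑ i, s.val (b i)⟫ := by rw [hsum_b, real_inner_smul_right]
      _ = ∑ i, ‖s.val (b i)‖ ^ 2 := by
        rw [inner_sum]
        exact sum_congr rfl fun i _ => s.inner_val_of_le (le_sup (mem_univ i))
      _ = m - 1 := by simp only [hnorm_b, sum_sub_distrib, hsum_a, sum_const, card_univ,
          nsmul_eq_mul, mul_one, m]
  have hm : m - 1 ≠ 0 := sub_ne_zero.mpr (by simpa [m] using hι)
  have hone : ⟪s.val (univ.sup b), s.val x⟫ = 1 := by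
    simpa [hm] using hinner
  have hcs := real_inner_le_norm (s.val (univ.sup b)) (s.val x)
  rw [hone, hx, mul_one] at hcs
  exact le_antisymm (s.norm_val_le_one _) hcs

end OrthomodularLattice

end HState

theorem En_of_strong_hilbert_states_general {E : Type*} [NormedAddCommGroup E]
    [InnerProductSpace ℝ E]
    {α : Type*} [OrthomodularLattice α]
    (S : Set (HState E α)) (hS : IsStrongHSet S)
    (n : ℕ) (hn : 2 ≤ n) (a b : Fin n → α)
    (haa : ∀ i j : Fin n, i ≠ j → a i ≤ (a j)ᗮ)
    (hab : ∀ i : Fin n, a i ≤ (b i)ᗮ) :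
    Finset.univ.sup a ⊓ Finset.univ.inf (fun i => a i ⊔ b i) ≤ Finset.univ.sup b :=
  hS _ _ fun s _ hs =>
    s.norm_val_sup_eq_one_of_norm_val_eq_one haa hab (by rw [Fintype.card_fin]; omega) hs

theorem En_of_strong_hilbert_states {E : Type*} [NormedAddCommGroup E]
    [InnerProductSpace ℝ E] [CompleteSpace E]
    {α : Type*} [OrthomodularLattice α]
    (S : Set (HState E α)) (hS : IsStrongHSet S)
    (n : ℕ) (hn : 2 ≤ n) (a b : Fin n → α)
    (haa : ∀ i j : Fin n, i ≠ j → a i ≤ (a j)ᗮ)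
    (hab : ∀ i : Fin n, a i ≤ (b i)ᗮ) :
    Finset.univ.sup a ⊓ Finset.univ.inf (fun i => a i ⊔ b i) ≤ Finset.univ.sup b :=
  En_of_strong_hilbert_states_general S hS n hn a b haa hab
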